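/- Let m ≥ 1. There is a constant C > 0 such that for all t ≥ 0, all b ∈ ℝ, all unit vectors V ∈ ℍ^m, and all (X,Z) ∈ ℍ^m × Im(ℍ): |(E_V f_{t,b})(X,Z)| ≤ C · B_t(X,Z)^{−1/4} · (1 + |b|), where B_t(X,Z) = (e^{−2t} + ‖X‖²/4)² + |Z|² and f_{t,b} : ℍ^m × Im(ℍ) → ℂ is the complex-valued function f_{t,b}(X,Z) = B_t(X,Z)^{ib} := exp(i·b·log B_t(X,Z)). -/

import Mathlib

/-! Since `|B_t^{ib}| = 1`, the chain rule gives `|E_V B_t^{ib}| = |b| · |E_V B_t| / B_t`.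
With `u = e^{-2t} + ‖X‖²/4` one has `E_V B_t = u · Σⱼ ⟪Xⱼ, Vⱼ⟫ + 2 ⟪Z, Im(X*V)/2⟫`, which
Cauchy–Schwarz bounds by `‖X‖ (u + |Z|)`. Since `‖X‖ ≤ 2√u ≤ 2 B_t^{1/4}` and
`u, |Z| ≤ B_t^{1/2}`, this is at most `4 B_t^{3/4}`, whence the bound with `C = 4`. -/

open Quaternion

noncomputable section

/-- The imaginary part `Im(q) = (q - q*)/2` of a quaternion. -/
def qIm (q : Quaternion ℝ) : Quaternion ℝ := (q - star q) / 2

/-- The left-invariant vector field `E_V` of the 2-step nilpotent group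
`N̄ = ℍ^m × Im(ℍ)`, acting on (`F`-valued) functions on `ℍ^m × ℍ` by
`(E_V f)(X,Z) = Df(X,Z)[(V, Im(X*V)/2)]` (Fréchet derivative). -/
def EV {F : Type*} [NormedAddCommGroup F] [NormedSpace ℝ F] (m : ℕ)
    (V : Fin m → Quaternion ℝ)
    (f : (Fin m → Quaternion ℝ) × Quaternion ℝ → F) :
    (Fin m → Quaternion ℝ) × Quaternion ℝ → F :=
  fun p => fderiv ℝ f p (V, qIm (∑ j, star (p.1 j) * V j) / 2)

/-- `B_t(X,Z) = (e^{-2t} + ‖X‖²/4)² + |Z|²` as a function on `ℍ^m × ℍ`,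
where `‖X‖² = ∑ⱼ |Xⱼ|²`. -/
def BtF (m : ℕ) (t : ℝ) : (Fin m → Quaternion ℝ) × Quaternion ℝ → ℝ :=
  fun p => (Real.exp (-2 * t) + (∑ j, Quaternion.normSq (p.1 j)) / 4) ^ 2
    + Quaternion.normSq p.2

/-- The complex-valued function `f_{t,b} = B_t^{ib} = exp(i·b·log B_t)`. -/
def ftb (m : ℕ) (t b : ℝ) : (Fin m → Quaternion ℝ) × Quaternion ℝ → ℂ :=
  fun p => Complex.exp (Complex.I * b * Real.log (BtF m t p))

open Finset

lemma Quaternion.norm_div_two (q : ℍ) : ‖q / 2‖ = ‖q‖ / 2 := by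
  rw [norm_div, show (2 : ℍ) = ((2 : ℝ) : ℍ) from rfl, Quaternion.norm_coe, Real.norm_ofNat]

lemma norm_qIm_le (q : ℍ) : ‖qIm q‖ ≤ ‖q‖ :=
  calc ‖qIm q‖ = ‖q - star q‖ / 2 := by rw [qIm, Quaternion.norm_div_two]
    _ ≤ (‖q‖ + ‖star q‖) / 2 := by gcongr; exact norm_sub_le _ _
    _ = ‖q‖ := by rw [Quaternion.norm_star]; ring

lemma norm_sum_star_mul_le {ι R : Type*} [NormedRing R] [StarRing R] [NormedStarGroup R]
    (s : Finset ι) (x y : ι → R) :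
    ‖∑ i ∈ s, star (x i) * y i‖ ≤ √(∑ i ∈ s, ‖x i‖ ^ 2) * √(∑ i ∈ s, ‖y i‖ ^ 2) :=
  calc ‖∑ i ∈ s, star (x i) * y i‖ ≤ ∑ i ∈ s, ‖x i‖ * ‖y i‖ :=
        (norm_sum_le _ _).trans <| sum_le_sum fun i _ =>
          (norm_mul_le _ _).trans_eq (by rw [norm_star (x i)])
    _ ≤ _ := Real.sum_mul_le_sqrt_mul_sqrt _ _ _

lemma abs_sum_inner_le {ι E : Type*} [NormedAddCommGroup E] [InnerProductSpace ℝ E]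
    (s : Finset ι) (x y : ι → E) :
    |∑ i ∈ s, inner ℝ (x i) (y i)| ≤ √(∑ i ∈ s, ‖x i‖ ^ 2) * √(∑ i ∈ s, ‖y i‖ ^ 2) :=
  calc |∑ i ∈ s, inner ℝ (x i) (y i)| ≤ ∑ i ∈ s, ‖x i‖ * ‖y i‖ :=
        (abs_sum_le_sum_abs _ _).trans <| sum_le_sum fun _ _ => abs_real_inner_le_norm _ _
    _ ≤ _ := Real.sum_mul_le_sqrt_mul_sqrt _ _ _

lemma sqrt_mul_add_le_four_mul_rpow {g u z : ℝ} (hg : 0 ≤ g) (hgu : g / 4 ≤ u) (hz : 0 ≤ z) :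
    √g * (u + z) ≤ 4 * (u ^ 2 + z ^ 2) ^ (3 / 4 : ℝ) := by
  set B := u ^ 2 + z ^ 2
  have hB : 0 ≤ B := by positivity
  set r := B ^ (1 / 4 : ℝ)
  have hr : 0 ≤ r := Real.rpow_nonneg hB _
  have hr4 : r ^ 4 = B := by
    rw [← Real.rpow_natCast, ← Real.rpow_mul hB]
    norm_num
  have hr3 : B ^ (3 / 4 : ℝ) = r ^ 3 := by
    rw [← Real.rpow_natCast, ← Real.rpow_mul hB]
    norm_num
  have hu : u ≤ r ^ 2 := by nlinarith [sq_nonneg (u - r ^ 2), sq_nonneg (u + r ^ 2)]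
  have hz' : z ≤ r ^ 2 := by nlinarith [sq_nonneg (z - r ^ 2)]
  have hg' : √g ≤ 2 * r := Real.sqrt_le_iff.mpr ⟨by positivity, by linarith⟩
  calc √g * (u + z) ≤ (2 * r) * (r ^ 2 + r ^ 2) := by gcongr; linarith
    _ = 4 * B ^ (3 / 4 : ℝ) := by rw [hr3]; ring

lemma norm_fderiv_cexp_I_mul_log {E : Type*} [NormedAddCommGroup E] [NormedSpace ℝ E]
    {g : E → ℝ} {p : E} (hg : DifferentiableAt ℝ g p) (hpos : 0 < g p) (b : ℝ) (v : E) :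
    ‖fderiv ℝ (fun x => Complex.exp (Complex.I * b * Real.log (g x))) p v‖
      = |b| * |fderiv ℝ g p v| / g p := by
  have h := ((Complex.ofRealCLM.hasFDerivAt.comp p
    (hg.hasFDerivAt.log hpos.ne')).const_mul (Complex.I * b)).cexp
  rw [HasFDerivAt.fderiv (f := fun x => Complex.exp (Complex.I * b * Real.log (g x))) h]
  simp only [Function.comp_apply, Complex.ofRealCLM_apply, ContinuousLinearMap.comp_smulₛₗ,
    map_inv₀, Real.ringHom_apply, smul_apply, ContinuousLinearMap.comp_apply, Complex.real_smul,
    Complex.ofReal_inv, smul_eq_mul, Complex.norm_mul, Complex.norm_exp, Complex.mul_re,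
    Complex.I_re, Complex.ofReal_re, zero_mul, Complex.I_im, Complex.ofReal_im, mul_zero, sub_self,
    Complex.mul_im, one_mul, zero_add, Real.exp_zero, Complex.norm_I, Complex.norm_real,
    Real.norm_eq_abs, norm_inv, abs_of_pos hpos]
  ring

section BtF

variable (m : ℕ) (t : ℝ)

lemma BtF_eq_norm : BtF m t = fun p =>
    (Real.exp (-2 * t) + (∑ j, ‖p.1 j‖ ^ 2) / 4) ^ 2 + ‖p.2‖ ^ 2 := by
  funext p
  simp only [BtF, Quaternion.normSq_eq_norm_mul_self, sq]

lemma BtF_pos (p : (Fin m → ℍ) × ℍ) : 0 < BtF m t p := by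
  rw [BtF_eq_norm]
  have : 0 < Real.exp (-2 * t) + (∑ j, ‖p.1 j‖ ^ 2) / 4 := by positivity
  positivity

lemma hasFDerivAt_BtF (p : (Fin m → ℍ) × ℍ) :
    HasFDerivAt (BtF m t)
      ((Real.exp (-2 * t) + (∑ j, ‖p.1 j‖ ^ 2) / 4) •
          ∑ j, (innerSL ℝ (p.1 j)).comp
            ((ContinuousLinearMap.proj j).comp (ContinuousLinearMap.fst ℝ _ ℍ))
        + (2 : ℝ) • (innerSL ℝ p.2).comp (ContinuousLinearMap.snd ℝ (Fin m → ℍ) ℍ)) p := by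
  have hX := HasFDerivAt.fun_sum (u := univ) fun j (_ : j ∈ univ) =>
    (((ContinuousLinearMap.proj j).comp
      (ContinuousLinearMap.fst ℝ (Fin m → ℍ) ℍ)).hasFDerivAt (x := p)).norm_sq
  have hB := ((hX.mul_const (4⁻¹ : ℝ)).const_add (Real.exp (-2 * t))).pow 2 |>.add
    (ContinuousLinearMap.snd ℝ (Fin m → ℍ) ℍ).hasFDerivAt.norm_sq
  rw [BtF_eq_norm]
  refine hB.congr_fderiv ?_
  ext v
  · simp only [neg_mul, ContinuousLinearMap.comp_apply, ContinuousLinearMap.coe_fst',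
      ContinuousLinearMap.proj_apply, Nat.add_one_sub_one, pow_one, smul_add, nsmul_eq_mul,
      Nat.cast_ofNat, ContinuousLinearMap.coe_snd', ContinuousLinearMap.add_comp,
      ContinuousLinearMap.smul_comp, add_apply, smul_apply, ContinuousLinearMap.inl_apply,
      _root_.sum_apply, coe_innerSL_apply, ← mul_sum, smul_eq_mul, inner_zero_right, add_zero,
      mul_zero]
    ring
  · simp

lemma fderiv_BtF_apply (p : (Fin m → ℍ) × ℍ) (v : Fin m → ℍ) (w : ℍ) :
    fderiv ℝ (BtF m t) p (v, w) = (Real.exp (-2 * t) + (∑ j, ‖p.1 j‖ ^ 2) / 4) *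
      ∑ j, inner ℝ (p.1 j) (v j) + 2 * inner ℝ p.2 w := by
  simp [(hasFDerivAt_BtF m t p).fderiv]

lemma abs_EV_BtF_le {V : Fin m → ℍ} (hV : ∑ j, ‖V j‖ ^ 2 ≤ 1) (p : (Fin m → ℍ) × ℍ) :
    |EV m V (BtF m t) p| ≤ 4 * BtF m t p ^ (3 / 4 : ℝ) := by
  obtain ⟨X, Z⟩ := p
  set u := Real.exp (-2 * t) + (∑ j, ‖X j‖ ^ 2) / 4
  have hu : 0 ≤ u := by positivity
  have hV' : √(∑ j, ‖V j‖ ^ 2) ≤ 1 := Real.sqrt_le_one.mpr hV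
  have hXV : |∑ j, inner ℝ (X j) (V j)| ≤ √(∑ j, ‖X j‖ ^ 2) :=
    (abs_sum_inner_le _ X V).trans <| mul_le_of_le_one_right (Real.sqrt_nonneg _) hV'
  have hW : ‖qIm (∑ j, star (X j) * V j) / 2‖ ≤ √(∑ j, ‖X j‖ ^ 2) / 2 := by
    rw [Quaternion.norm_div_two]
    gcongr
    exact (norm_qIm_le _).trans <| (norm_sum_star_mul_le _ X V).trans <|
      mul_le_of_le_one_right (Real.sqrt_nonneg _) hV'
  calc |EV m V (BtF m t) (X, Z)|
      = |u * ∑ j, inner ℝ (X j) (V j) + 2 * inner ℝ Z (qIm (∑ j, star (X j) * V j) / 2)| := by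
        rw [EV, fderiv_BtF_apply]
    _ ≤ u * √(∑ j, ‖X j‖ ^ 2) + 2 * (‖Z‖ * (√(∑ j, ‖X j‖ ^ 2) / 2)) := by
        refine (abs_add_le _ _).trans (add_le_add ?_ ?_)
        · rw [abs_mul, abs_of_nonneg hu]; gcongr
        · rw [abs_mul, abs_two]; gcongr
          exact (abs_real_inner_le_norm _ _).trans (by gcongr)
    _ = √(∑ j, ‖X j‖ ^ 2) * (u + ‖Z‖) := by ring
    _ ≤ 4 * BtF m t (X, Z) ^ (3 / 4 : ℝ) := by
        rw [BtF_eq_norm]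
        exact sqrt_mul_add_le_four_mul_rpow (by positivity)
          (le_add_of_nonneg_left (Real.exp_pos _).le) (norm_nonneg Z)

end BtF

lemma norm_EV_ftb (m : ℕ) (t b : ℝ) (V : Fin m → ℍ) (p : (Fin m → ℍ) × ℍ) :
    ‖EV m V (ftb m t b) p‖ = |b| * |EV m V (BtF m t) p| / BtF m t p :=
  norm_fderiv_cexp_I_mul_log (hasFDerivAt_BtF m t p).differentiableAt (BtF_pos m t p) b _

theorem stmt_13_general (m : ℕ) :
    ∃ C : ℝ, 0 < C ∧ ∀ t : ℝ, 0 ≤ t → ∀ b : ℝ, ∀ V : Fin m → Quaternion ℝ,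
      (∑ k, Quaternion.normSq (V k)) = 1 →
      ∀ X : Fin m → Quaternion ℝ, ∀ Z : Quaternion ℝ, Z.re = 0 →
        ‖EV m V (ftb m t b) (X, Z)‖
          ≤ C * BtF m t (X, Z) ^ (-(1 : ℝ) / 4) * (1 + |b|) := by
  refine ⟨4, by norm_num, fun t _ b V hV X Z _ => ?_⟩
  have hV' : ∑ j, ‖V j‖ ^ 2 ≤ 1 := by
    simp only [Quaternion.normSq_eq_norm_mul_self, ← sq] at hV
    exact hV.le
  set B := BtF m t (X, Z)
  have hB : 0 < B := BtF_pos m t (X, Z)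
  calc ‖EV m V (ftb m t b) (X, Z)‖ = |b| * |EV m V (BtF m t) (X, Z)| / B := norm_EV_ftb ..
    _ ≤ |b| * (4 * B ^ (3 / 4 : ℝ)) / B := by gcongr; exact abs_EV_BtF_le m t hV' _
    _ = 4 * B ^ (-(1 : ℝ) / 4) * |b| := by
        rw [show -(1 : ℝ) / 4 = 3 / 4 - 1 by norm_num, Real.rpow_sub hB, Real.rpow_one]
        ring
    _ ≤ 4 * B ^ (-(1 : ℝ) / 4) * (1 + |b|) := by gcongr; linarith

/-- there is `C > 0` with
`|E_V (B_t^{ib})| ≤ C · B_t^{-1/4} · (1 + |b|)` for all `t ≥ 0`, all `b ∈ ℝ`,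
all unit vectors `V ∈ ℍ^m` and all `(X,Z) ∈ ℍ^m × Im(ℍ)`. -/
theorem stmt_13 (m : ℕ) (hm : 1 ≤ m) :
    ∃ C : ℝ, 0 < C ∧ ∀ t : ℝ, 0 ≤ t → ∀ b : ℝ, ∀ V : Fin m → Quaternion ℝ,
      (∑ k, Quaternion.normSq (V k)) = 1 →
      ∀ X : Fin m → Quaternion ℝ, ∀ Z : Quaternion ℝ, Z.re = 0 →
        ‖EV m V (ftb m t b) (X, Z)‖
          ≤ C * BtF m t (X, Z) ^ (-(1 : ℝ) / 4) * (1 + |b|) :=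
  stmt_13_general m
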